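/- ∫_0^{π/4} ln(cos x) dx = (G/2) − (π/4)·ln 2, where G is the Catalan constant G = Σ_{r=0}^∞ (−1)^r/(2r+1)^2. -/

import Mathlib

open Real intervalIntegral

/-- The Catalan constant. -/
noncomputable def catalanConst : ℝ := ∑' r : ℕ, (-1 : ℝ) ^ r / (2 * (r : ℝ) + 1) ^ 2

/-! Write `S` and `C` for the integrals of `log ∘ sin` and `log ∘ cos` over `[0, π/4]`. The
reflection `x ↦ π/2 - x` turns `C` into the integral of `log ∘ sin` over `[π/4, π/2]`, so
`S + C = ∫₀^{π/2} log (sin x) dx = -(π/2) log 2`. The substitution `x = arctan t` turns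
`S - C = ∫₀^{π/4} log (tan x) dx` into `∫₀¹ log t / (1 + t²) dt`; expanding `1 / (1 + t²)` as a
geometric series and integrating termwise with `∫₀¹ t^k log t dt = -1/(k+1)²` gives `-G`, the
interchange being justified by the summability of `∑ 1/(2n+1)²`. -/

open MeasureTheory Set

theorem integral_pow_mul_log_zero_one (k : ℕ) :
    ∫ t in (0:ℝ)..1, t ^ k * log t = -1 / ((k : ℝ) + 1) ^ 2 := by
  have hk : (k : ℝ) + 1 ≠ 0 := by positivity
  let F : ℝ → ℝ := fun t => t ^ (k + 1) * log t / (k + 1) - t ^ (k + 1) / ((k : ℝ) + 1) ^ 2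
  have hF : Continuous F := by
    have h : Continuous fun t : ℝ => t ^ k * (t * log t) :=
      (continuous_pow k).mul continuous_mul_log
    refine ((h.div_const ((k : ℝ) + 1)).sub
      ((continuous_pow (k + 1)).div_const (((k : ℝ) + 1) ^ 2))).congr fun t => ?_
    simp only [F, Pi.sub_apply]
    ring
  have hF' : ∀ t ∈ Ioo (0:ℝ) 1, HasDerivAt F (t ^ k * log t) t := by
    intro t ht
    have ht0 : t ≠ 0 := ht.1.ne'
    refine ((((hasDerivAt_pow (k + 1) t).fun_mul (hasDerivAt_log ht0)).div_const
      ((k : ℝ) + 1)).fun_sub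
        ((hasDerivAt_pow (k + 1) t).div_const (((k : ℝ) + 1) ^ 2))).congr_deriv ?_
    rw [Nat.add_sub_cancel]
    push_cast
    field_simp
    ring
  rw [integral_eq_sub_of_hasDerivAt_of_le zero_le_one hF.continuousOn hF'
    (intervalIntegrable_log'.continuousOn_mul (continuous_pow k).continuousOn)]
  simp [F, neg_div]

theorem summable_one_div_two_mul_add_one_sq :
    Summable fun n : ℕ => 1 / (2 * (n : ℝ) + 1) ^ 2 := by
  have := (summable_one_div_nat_pow.mpr one_lt_two).comp_injective
    (i := fun n : ℕ => 2 * n + 1) fun m n h => by simpa using h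
  simpa [Function.comp_def] using this

theorem hasSum_log_div_one_add_sq {t : ℝ} (ht : |t| ≤ 1) :
    HasSum (fun n : ℕ => (-1) ^ n * (t ^ (2 * n) * log t)) (log t / (1 + t ^ 2)) := by
  rcases ht.lt_or_eq with ht | ht
  · have hsq : |-t ^ 2| < 1 := by
      rw [abs_neg, abs_pow]
      exact pow_lt_one₀ (abs_nonneg t) ht two_ne_zero
    have hgeom := (hasSum_geometric_of_abs_lt_one hsq).mul_right (log t)
    rw [sub_neg_eq_add, inv_mul_eq_div] at hgeom
    refine hgeom.congr_fun fun n => ?_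
    rw [neg_pow, pow_mul]
    ring
  · have : log t = 0 := by rw [← log_abs, ht, log_one]
    simp [this, hasSum_zero]

theorem integral_norm_pow_mul_log_Ioc_zero_one (k : ℕ) :
    ∫ t in Ioc (0:ℝ) 1, ‖t ^ k * log t‖ = 1 / ((k : ℝ) + 1) ^ 2 := by
  have h : EqOn (fun t : ℝ => ‖t ^ k * log t‖) (fun t => -(t ^ k * log t)) (Ioc 0 1) :=
    fun t ht => Real.norm_of_nonpos <|
      mul_nonpos_of_nonneg_of_nonpos (pow_nonneg ht.1.le k) (log_nonpos ht.1.le ht.2)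
  rw [setIntegral_congr_fun measurableSet_Ioc h, MeasureTheory.integral_neg,
    ← integral_of_le zero_le_one, integral_pow_mul_log_zero_one]
  ring

theorem integral_log_div_one_add_sq_zero_one :
    ∫ t in (0:ℝ)..1, log t / (1 + t ^ 2) = -catalanConst := by
  let F : ℕ → ℝ → ℝ := fun n t => (-1) ^ n * (t ^ (2 * n) * log t)
  have hF : ∀ n, IntegrableOn (F n) (Ioc 0 1) := fun n =>
    ((intervalIntegrable_log'.continuousOn_mul (continuous_pow (2 * n)).continuousOn).const_mul
      ((-1 : ℝ) ^ n)).1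
  have hsum : ∀ t ∈ Ioc (0:ℝ) 1, HasSum (fun n => F n t) (log t / (1 + t ^ 2)) := fun t ht =>
    hasSum_log_div_one_add_sq (abs_le.2 ⟨by linarith [ht.1], ht.2⟩)
  have hnorm : Summable fun n => ∫ t in Ioc (0:ℝ) 1, ‖F n t‖ := by
    have h : ∀ n t, ‖F n t‖ = ‖t ^ (2 * n) * log t‖ := fun n t => by
      rw [norm_mul, norm_pow, norm_neg, norm_one, one_pow, one_mul]
    simp only [h, integral_norm_pow_mul_log_Ioc_zero_one]
    push_cast
    exact summable_one_div_two_mul_add_one_sq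
  calc ∫ t in (0:ℝ)..1, log t / (1 + t ^ 2)
      = ∫ t in Ioc (0:ℝ) 1, ∑' n, F n t := by
        rw [integral_of_le zero_le_one]
        exact setIntegral_congr_fun measurableSet_Ioc fun t ht => (hsum t ht).tsum_eq.symm
    _ = ∑' n, ∫ t in Ioc (0:ℝ) 1, F n t :=
        (integral_tsum_of_summable_integral_norm hF hnorm).symm
    _ = ∑' n : ℕ, -((-1) ^ n / (2 * (n : ℝ) + 1) ^ 2) := by
        congr 1 with n
        rw [MeasureTheory.integral_const_mul, ← integral_of_le zero_le_one,
          integral_pow_mul_log_zero_one]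
        push_cast
        ring
    _ = -catalanConst := tsum_neg

-- `log 0 = 0` makes this hold even where `sin` or `cos` vanishes (the other one is then `±1`).
theorem Real.log_tan (x : ℝ) : log (tan x) = log (sin x) - log (cos x) := by
  rw [tan_eq_sin_div_cos]
  rcases eq_or_ne (sin x) 0 with hs | hs
  · have : cos x ^ 2 = 1 := by simpa [hs] using cos_sq_add_sin_sq x
    simp [hs, log_eq_zero.2 (Or.inr (sq_eq_one_iff.1 this))]
  rcases eq_or_ne (cos x) 0 with hc | hc
  · have : sin x ^ 2 = 1 := by simpa [hc] using sin_sq_add_cos_sq x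
    simp [hc, log_eq_zero.2 (Or.inr (sq_eq_one_iff.1 this))]
  exact log_div hs hc

theorem integral_log_tan_zero_pi_div_four :
    ∫ x in (0:ℝ)..(π / 4), log (tan x) = ∫ t in (0:ℝ)..1, log t / (1 + t ^ 2) := by
  have h := integral_image_eq_integral_abs_deriv_smul measurableSet_Icc
    (fun t _ => (hasDerivAt_arctan t).hasDerivWithinAt) arctan_injective.injOn
    (fun x => log (tan x)) (s := Icc 0 1)
  rw [continuous_arctan.image_Icc_of_strictMono arctan_strictMono, arctan_zero, arctan_one] at h
  rw [integral_of_le (by positivity), integral_of_le zero_le_one,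
    ← integral_Icc_eq_integral_Ioc, ← integral_Icc_eq_integral_Ioc, h]
  refine setIntegral_congr_fun measurableSet_Icc fun t _ => ?_
  rw [tan_arctan, abs_of_pos (by positivity), smul_eq_mul, one_div_mul_eq_div]

theorem stmt2 :
    (∫ x in (0:ℝ)..(π/4), Real.log (Real.cos x)) =
      catalanConst / 2 - (π / 4) * Real.log 2 := by
  have hsin {a b : ℝ} : IntervalIntegrable (fun x => log (sin x)) volume a b :=
    intervalIntegrable_log_sin
  have hcos {a b : ℝ} : IntervalIntegrable (fun x => log (cos x)) volume a b :=
    intervalIntegrable_log_cos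
  have hsum : (∫ x in (0:ℝ)..(π / 4), log (sin x)) + ∫ x in (0:ℝ)..(π / 4), log (cos x) =
      -log 2 * π / 2 := by
    have hreflect :
        ∫ x in (0:ℝ)..(π / 4), log (cos x) = ∫ x in (π / 4)..(π / 2), log (sin x) := by
      simpa [sin_pi_div_two_sub, show π / 2 - π / 4 = π / 4 by ring] using
        integral_comp_sub_left (fun x => log (sin x)) (π / 2) (a := 0) (b := π / 4)
    rw [hreflect, integral_add_adjacent_intervals hsin hsin, integral_log_sin_zero_pi_div_two]
  have hdiff : (∫ x in (0:ℝ)..(π / 4), log (sin x)) - ∫ x in (0:ℝ)..(π / 4), log (cos x) =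
      -catalanConst := by
    rw [← integral_sub hsin hcos]
    simp only [← log_tan]
    rw [integral_log_tan_zero_pi_div_four, integral_log_div_one_add_sq_zero_one]
  linear_combination (hsum - hdiff) / 2
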